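/- arXiv:2206.05421 — 2 statements merged into one kernel-verified Lean document; each statement's English description precedes it below -/
import Mathlib

section
/- Let P be a graphoid over V and let W = ⟨π¹, ..., π^m⟩ be a DAG-changing walk in the permutohedron relative to (j, k) — i.e., consecutive permutations differ by an adjacent transposition, G_{π¹} = ... = G_{π^{m-1}}, G_{π^{m-1}} ≠ G_{π^m}, and π^m is obtained from π^{m-1} by swapping adjacent entries j, k. Then j → k is a singular edge in G_{π¹}, i.e., there is no directed path from j to k in G_{π¹} other than the edge j → k itself. -/
open Classical
attribute [local instance] Classical.propDecidable

variable {V : Type} [Fintype V] [DecidableEq V]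

/-- A conditional independence model over variable set `V`:
`I A B C` means `A` is independent of `B` given `C`. -/
abbrev IndepModel (V : Type) :=
  Finset V → Finset V → Finset V → Prop

/-- Semigraphoid axioms. -/
structure Semigraphoid (I : IndepModel V) : Prop where
  symm : ∀ A B C, I A B C → I B A C
  decomposition : ∀ A B W C, I A (B ∪ W) C → I A B C ∧ I A W C
  weakUnion : ∀ A B W C, I A (B ∪ W) C → I A B (C ∪ W)
  contraction : ∀ A B W C, I A B C → I A W (C ∪ B) → I A (B ∪ W) C

/-- Graphoid axioms. -/
structure Graphoid (I : IndepModel V) extends Semigraphoid I : Prop where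
  intersection : ∀ A B W C, I A B (C ∪ W) → I A W (C ∪ B) → I A (B ∪ W) C

/-- Compositional graphoid axioms. -/
structure CompGraphoid (I : IndepModel V) extends Graphoid I : Prop where
  composition : ∀ A B W C, I A B C → I A W C → I A (B ∪ W) C

/-- `M` is a Markov blanket of `X` relative to `Z`. -/
def MarkovBlanket (I : IndepModel V) (X : V) (Z M : Finset V) : Prop :=
  M ⊆ Z ∧ I {X} (Z \ M) M

/-- `M` is a Markov boundary (minimal Markov blanket) of `X` relative to `Z`. -/
def MarkovBoundary (I : IndepModel V) (X : V) (Z M : Finset V) : Prop :=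
  MarkovBlanket I X Z M ∧ ∀ M' ⊂ M, ¬ I {X} (Z \ M') M'

/-- A directed graph on `V`, given by its finite set of directed edges. -/
abbrev EdgeSet (V : Type) := Finset (V × V)

def Adj (E : EdgeSet V) (a b : V) : Prop := (a, b) ∈ E

/-- Acyclicity: no vertex reaches itself by a nontrivial directed path. -/
def IsDAG (E : EdgeSet V) : Prop := ∀ v, ¬ Relation.TransGen (Adj E) v v

def parents (E : EdgeSet V) (v : V) : Finset V :=
  (E.filter (fun e => e.2 = v)).image Prod.fst

def IsCollider (E : EdgeSet V) (x y z : V) : Prop := Adj E x y ∧ Adj E z y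

/-- The middle vertex `y` of a path triple `x - y - z` does not block the path
given conditioning set `C`. -/
def ActiveTriple (E : EdgeSet V) (C : Finset V) (x y z : V) : Prop :=
  (IsCollider E x y z ∧ ∃ d ∈ C, Relation.ReflTransGen (Adj E) y d) ∨
  (¬ IsCollider E x y z ∧ y ∉ C)

/-- `a` and `b` are d-connected given `C` in the graph `E`. -/
def DConn (E : EdgeSet V) (C : Finset V) (a b : V) : Prop :=
  ∃ p : List V, 2 ≤ p.length ∧ p.head? = some a ∧ p.getLast? = some b ∧
    (∀ (i : ℕ) (h : i + 1 < p.length),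
      Adj E (p.get ⟨i, by omega⟩) (p.get ⟨i + 1, h⟩) ∨
      Adj E (p.get ⟨i + 1, h⟩) (p.get ⟨i, by omega⟩)) ∧
    (∀ (i : ℕ) (h : i + 2 < p.length),
      ActiveTriple E C (p.get ⟨i, by omega⟩) (p.get ⟨i + 1, by omega⟩) (p.get ⟨i + 2, h⟩))

/-- `A` and `B` are d-separated given `C`. -/
def DSep (E : EdgeSet V) (A B C : Finset V) : Prop :=
  ∀ a ∈ A, ∀ b ∈ B, ¬ DConn E C a b

def PairwiseDisjoint3 (A B C : Finset V) : Prop :=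
  Disjoint A B ∧ Disjoint A C ∧ Disjoint B C

/-- `I(G) ⊆ I(P)`: every d-separation of the graph is an independence of `I`. -/
def Markovian (E : EdgeSet V) (I : IndepModel V) : Prop :=
  ∀ A B C, PairwiseDisjoint3 A B C → DSep E A B C → I A B C

/-- `I(P) ⊆ I(G)`: every independence of `I` is a d-separation of the graph. -/
def FaithfulTo (E : EdgeSet V) (I : IndepModel V) : Prop :=
  ∀ A B C, PairwiseDisjoint3 A B C → I A B C → DSep E A B C

/-- `I(E) ⊆ I(E')` : every d-separation statement of `E` holds in `E'`. -/
def ISub (E E' : EdgeSet V) : Prop :=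
  ∀ A B C, PairwiseDisjoint3 A B C → DSep E A B C → DSep E' A B C

/-- Markov equivalence: same d-separation statements. -/
def MEquiv (E E' : EdgeSet V) : Prop := ISub E E' ∧ ISub E' E

/-- Markovian DAGs. -/
def CMC (I : IndepModel V) : Set (EdgeSet V) := {G | IsDAG G ∧ Markovian G I}

/-- Faithful DAGs. -/
def CFC (I : IndepModel V) : Set (EdgeSet V) := {G | G ∈ CMC I ∧ FaithfulTo G I}

/-- SGS-minimal DAGs: Markovian with no Markovian proper subgraph. -/
def SGSmin (I : IndepModel V) : Set (EdgeSet V) :=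
  {G | G ∈ CMC I ∧ ∀ G' ⊆ G, G' ∈ CMC I → G' = G}

/-- Frugal DAGs: Markovian with minimal edge count. -/
def Fr (I : IndepModel V) : Set (EdgeSet V) :=
  {G | G ∈ CMC I ∧ ∀ G' ∈ CMC I, G.card ≤ G'.card}

/-- Uniquely frugal DAGs. -/
def uFr (I : IndepModel V) : Set (EdgeSet V) :=
  {G | G ∈ Fr I ∧ ∀ G' ∈ Fr I, MEquiv G' G}

/-- P-minimal DAGs: Markovian `G` such that no Markovian `G'` has `I(G) ⊊ I(G')`. -/
def Pm (I : IndepModel V) : Set (EdgeSet V) :=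
  {G | G ∈ CMC I ∧ ∀ G' ∈ CMC I, ISub G G' → ISub G' G}

/-- Uniquely P-minimal DAGs. -/
def uPm (I : IndepModel V) : Set (EdgeSet V) :=
  {G | G ∈ Pm I ∧ ∀ G' ∈ Pm I, MEquiv G' G}

/-- A list is a permutation of the vertices of `V`. -/
def IsPermList (π : List V) : Prop := π.Nodup ∧ ∀ v : V, v ∈ π

/-- The set of vertices preceding `k` in the permutation `π`. -/
def pre (π : List V) (k : V) : Finset V := (π.takeWhile (fun x => x != k)).toFinset

/-- The DAG induced from a permutation `π` by the Raskutti–Uhler (RU) construction: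
`j → k` is an edge iff `j` precedes `k` in `π` and `X_j` is dependent on `X_k`
given all other predecessors of `k`. -/
noncomputable def RUedges (I : IndepModel V) (π : List V) : EdgeSet V :=
  Finset.univ.filter
    (fun e => e.1 ∈ pre π e.2 ∧ ¬ I {e.1} {e.2} ((pre π e.2).erase e.1))

/-- `j → k` is a covered edge of `E`. -/
def CoveredEdge (E : EdgeSet V) (j k : V) : Prop :=
  (j, k) ∈ E ∧ parents E j = (parents E k).erase j

/-- `j → k` is a singular edge of `E`: no directed path from `j` to `k` other than
the edge itself. -/
def SingularEdge (E : EdgeSet V) (j k : V) : Prop :=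
  (j, k) ∈ E ∧
    ∀ i, Relation.TransGen (Adj E) j i → Relation.TransGen (Adj E) i k → i = j ∨ i = k

/-- `π` is a causal order of the graph `E`: every ancestor of a vertex precedes it. -/
def CausalOrder (E : EdgeSet V) (π : List V) : Prop :=
  IsPermList π ∧ ∀ a b, Relation.TransGen (Adj E) a b → π.idxOf a < π.idxOf b

/-- Two permutations differ by one adjacent transposition. -/
def AdjTrans (π τ : List V) : Prop :=
  ∃ (δ₁ δ₂ : List V) (a b : V), π = δ₁ ++ a :: b :: δ₂ ∧ τ = δ₁ ++ b :: a :: δ₂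

/-- The non-descendants of `j` in the graph `E`. -/
noncomputable def nonDesc (E : EdgeSet V) (j : V) : Finset V :=
  Finset.univ.filter (fun i => ¬ Relation.ReflTransGen (Adj E) j i)

/-! As `G_{π¹} = G_{π^{m-1}}`, only the last step matters. Swapping adjacent entries `j, k`
of `π` changes `G_π` only if `j → k` is an edge of `G_π`: only the predecessor sets of `j`
and `k` move, by `k` and `j` respectively, and if `X_j ⊥ X_k ∣ S` for the common
predecessors `S` then intersection and contraction make the dependence of `X_a` on `X_k`
(resp. `X_j`) insensitive to adding `j` (resp. `k`) to the conditioning set. Such an edge is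
automatically singular, since positions in `π` increase along directed paths of `G_π` and
no vertex sits between `j` and `k`. -/

section

variable {α : Type} [DecidableEq α]

theorem pre_append_cons_self {l₁ l₂ : List α} {b : α} (h : b ∉ l₁) :
    pre (l₁ ++ b :: l₂) b = l₁.toFinset := by
  induction l₁ with
  | nil => simp [pre]
  | cons a l ih =>
    simp only [List.mem_cons, not_or] at h
    simp only [pre] at ih ⊢
    rw [List.cons_append, List.takeWhile_cons_of_pos (by simpa using Ne.symm h.1),
      List.toFinset_cons, ih h.2, List.toFinset_cons]

theorem pre_swap_eq {δ₁ δ₂ : List α} {j k b : α} (h : b ∈ δ₁ ∨ b ≠ j ∧ b ≠ k) :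
    pre (δ₁ ++ j :: k :: δ₂) b = pre (δ₁ ++ k :: j :: δ₂) b := by
  induction δ₁ with
  | nil =>
    obtain ⟨hbj, hbk⟩ := h.resolve_left List.not_mem_nil
    simp [pre, List.takeWhile_cons_of_pos, Ne.symm hbj, Ne.symm hbk, Finset.insert_comm]
  | cons a δ ih =>
    by_cases hab : a = b
    · simp [pre, hab]
    · have h' : b ∈ δ ∨ b ≠ j ∧ b ≠ k := by simpa [Ne.symm hab] using h
      simp only [pre] at ih ⊢
      have hpos : (a != b) = true := by simpa using hab
      rw [List.cons_append, List.cons_append,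
        List.takeWhile_cons_of_pos (p := fun x => x != b) hpos,
        List.takeWhile_cons_of_pos (p := fun x => x != b) hpos,
        List.toFinset_cons, List.toFinset_cons, ih h']

theorem idxOf_lt_idxOf_of_mem_pre {l : List α} {a b : α} (h : a ∈ pre l b) :
    l.idxOf a < l.idxOf b := by
  induction l with
  | nil => simp [pre] at h
  | cons c l ih =>
    by_cases hcb : c = b
    · simp [pre, hcb] at h
    · rw [List.idxOf_cons_ne l hcb]
      by_cases hac : a = c
      · simp [hac]
      · have : a ∈ pre l b := by simpa [pre, hcb, hac] using h
        simpa [List.idxOf_cons_ne l (Ne.symm hac)] using ih this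

theorem Graphoid.indep_insert_iff {I : IndepModel α}
    (hG : Graphoid I) {a j k : α} {C : Finset α} (h : I {j} {k} (insert a C)) :
    I {a} {k} (insert j C) ↔ I {a} {k} C := by
  have insert_eq (x : α) : insert x C = C ∪ {x} := by rw [Finset.insert_eq, Finset.union_comm]
  rw [insert_eq] at h ⊢
  constructor
  · intro haj
    have hk := hG.intersection {k} {a} {j} C (hG.symm _ _ _ haj) (hG.symm _ _ _ h)
    exact hG.symm _ _ _ (hG.decomposition {k} {a} {j} C hk).1
  · intro ha
    have hk := hG.contraction {k} {a} {j} C (hG.symm _ _ _ ha) (hG.symm _ _ _ h)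
    exact hG.symm _ _ _ (hG.weakUnion {k} {a} {j} C hk)

theorem ruParent_insert_iff {I : IndepModel α} (hG : Graphoid I) {S : Finset α} {j k : α}
    (hjS : j ∉ S) (hjk : I {j} {k} S) (a : α) :
    (a ∈ insert j S ∧ ¬ I {a} {k} ((insert j S).erase a)) ↔
      (a ∈ S ∧ ¬ I {a} {k} (S.erase a)) := by
  by_cases haj : a = j
  · subst haj
    simp [hjS, Finset.erase_insert hjS, hjk]
  · simp only [Finset.mem_insert, haj, false_or, Finset.erase_insert_of_ne (Ne.symm haj)]
    refine and_congr_right fun haS => not_congr (hG.indep_insert_iff ?_)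
    rwa [Finset.insert_erase haS]

end

section

variable {I : IndepModel V} {π τ : List V}

theorem mem_RUedges {a b : V} :
    (a, b) ∈ RUedges I π ↔ a ∈ pre π b ∧ ¬ I {a} {b} ((pre π b).erase a) := by
  simp [RUedges]

theorem idxOf_lt_idxOf_of_transGen_RUedges {a b : V}
    (h : Relation.TransGen (Adj (RUedges I π)) a b) : π.idxOf a < π.idxOf b := by
  induction h with
  | single hab => exact idxOf_lt_idxOf_of_mem_pre (mem_RUedges.mp hab).1
  | tail _ hbc ih => exact ih.trans (idxOf_lt_idxOf_of_mem_pre (mem_RUedges.mp hbc).1)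

theorem RUedges_congr (h : ∀ a b, (a, b) ∈ RUedges I π ↔ (a, b) ∈ RUedges I τ) :
    RUedges I π = RUedges I τ :=
  Finset.ext fun ⟨a, b⟩ => h a b

theorem RUedges_eq_of_pre_eq (h : ∀ b, pre π b = pre τ b) : RUedges I π = RUedges I τ :=
  RUedges_congr fun a b => by simp only [mem_RUedges, h]

variable {δ₁ δ₂ : List V} {j k : V}

theorem RUedges_swap_eq_of_mem (hj : j ∈ δ₁) :
    RUedges I (δ₁ ++ j :: k :: δ₂) = RUedges I (δ₁ ++ k :: j :: δ₂) := by
  refine RUedges_eq_of_pre_eq fun b => ?_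
  by_cases hb : b ∈ δ₁ ∨ b ≠ j ∧ b ≠ k
  · exact pre_swap_eq hb
  obtain ⟨hbδ, rfl⟩ : b ∉ δ₁ ∧ b = k := by grind
  have hbj : b ≠ j := fun h => hbδ (h ▸ hj)
  rw [List.append_cons δ₁, pre_append_cons_self (by simp [hbδ, hbj]), pre_append_cons_self hbδ]
  simp [hj]

theorem RUedges_swap_eq_of_not_mem_edge (hG : Graphoid I) (hjk : j ≠ k) (hj : j ∉ δ₁)
    (hk : k ∉ δ₁) (hedge : (j, k) ∉ RUedges I (δ₁ ++ j :: k :: δ₂)) :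
    RUedges I (δ₁ ++ k :: j :: δ₂) = RUedges I (δ₁ ++ j :: k :: δ₂) := by
  have hpre_k : pre (δ₁ ++ j :: k :: δ₂) k = insert j δ₁.toFinset := by
    rw [List.append_cons δ₁, pre_append_cons_self (by simp [hk, Ne.symm hjk])]
    simp
  have hpre_j : pre (δ₁ ++ k :: j :: δ₂) j = insert k δ₁.toFinset := by
    rw [List.append_cons δ₁, pre_append_cons_self (by simp [hj, hjk])]
    simp
  have hjS : j ∉ δ₁.toFinset := by simpa using hj
  have hkS : k ∉ δ₁.toFinset := by simpa using hk
  have hindep : I {j} {k} δ₁.toFinset := by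
    simpa [mem_RUedges, hpre_k, Finset.erase_insert hjS] using hedge
  refine RUedges_congr fun a b => ?_
  by_cases hbk : b = k
  · subst hbk
    rw [mem_RUedges, mem_RUedges, hpre_k, pre_append_cons_self hk]
    exact (ruParent_insert_iff hG hjS hindep a).symm
  by_cases hbj : b = j
  · subst hbj
    rw [mem_RUedges, mem_RUedges, hpre_j, pre_append_cons_self hj]
    exact ruParent_insert_iff hG hkS (hG.symm _ _ _ hindep) a
  simp only [mem_RUedges, pre_swap_eq (Or.inr ⟨hbj, hbk⟩)]

theorem singularEdge_RUedges_of_swap_ne (hG : Graphoid I)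
    (hne : RUedges I (δ₁ ++ k :: j :: δ₂) ≠ RUedges I (δ₁ ++ j :: k :: δ₂)) :
    SingularEdge (RUedges I (δ₁ ++ j :: k :: δ₂)) j k := by
  have hjk : j ≠ k := by rintro rfl; exact hne rfl
  have hj : j ∉ δ₁ := fun hj => hne (RUedges_swap_eq_of_mem hj).symm
  have hk : k ∉ δ₁ := fun hk => hne (RUedges_swap_eq_of_mem hk)
  refine ⟨by_contra fun hedge => hne (RUedges_swap_eq_of_not_mem_edge hG hjk hj hk hedge), ?_⟩
  intro i hji hik
  have hidx_j : (δ₁ ++ j :: k :: δ₂).idxOf j = δ₁.length := by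
    simp [List.idxOf_append_of_notMem hj]
  have hidx_k : (δ₁ ++ j :: k :: δ₂).idxOf k = δ₁.length + 1 := by
    simp [List.idxOf_append_of_notMem hk, List.idxOf_cons_ne _ hjk]
  have := idxOf_lt_idxOf_of_transGen_RUedges hji
  have := idxOf_lt_idxOf_of_transGen_RUedges hik
  omega

end

theorem dag_changing_walk_singular_general (I : IndepModel V) (hG : Graphoid I)
    (n : ℕ) (ws : ℕ → List V) (j k : V)
    (heq : ∀ i < n, RUedges I (ws i) = RUedges I (ws 0))
    (hneq : RUedges I (ws n) ≠ RUedges I (ws (n - 1)))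
    (hlast : ∃ δ₁ δ₂ : List V,
      ws (n - 1) = δ₁ ++ j :: k :: δ₂ ∧ ws n = δ₁ ++ k :: j :: δ₂) :
    SingularEdge (RUedges I (ws 0)) j k := by
  obtain ⟨δ₁, δ₂, hπ, hτ⟩ := hlast
  have hstart : RUedges I (ws 0) = RUedges I (ws (n - 1)) := by
    rcases n with _ | n
    · rfl
    · exact (heq n n.lt_succ_self).symm
  rw [hstart, hπ]
  exact singularEdge_RUedges_of_swap_ne hG (hπ ▸ hτ ▸ hneq)

/-- if a walk in the permutohedron is DAG-preserving up to its last
step, which swaps adjacent entries `j, k` and changes the DAG, then `j → k` is a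
singular edge of the DAG induced by the initial permutation. -/
theorem dag_changing_walk_singular (I : IndepModel V) (hG : Graphoid I)
    (n : ℕ) (hn : 1 ≤ n) (ws : ℕ → List V) (j k : V)
    (hperm : IsPermList (ws 0))
    (hadj : ∀ i < n, AdjTrans (ws i) (ws (i + 1)))
    (heq : ∀ i < n, RUedges I (ws i) = RUedges I (ws 0))
    (hneq : RUedges I (ws n) ≠ RUedges I (ws (n - 1)))
    (hlast : ∃ δ₁ δ₂ : List V,
      ws (n - 1) = δ₁ ++ j :: k :: δ₂ ∧ ws n = δ₁ ++ k :: j :: δ₂) :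
    SingularEdge (RUedges I (ws 0)) j k :=
  dag_changing_walk_singular_general I hG n ws j k heq hneq hlast
end

section
/- Let P be a graphoid over V, let π be a permutation, and suppose j → k is a singular edge in the induced DAG G_π. Then there exists a sequence of permutations from π to τ = tuck(π, j, k), each obtained from the previous by an adjacent transposition, such that all intermediate permutations induce the same DAG G_π, and G_τ ≠ G_π. -/
open Classical
attribute [local instance] Classical.propDecidable

variable {V : Type} [Fintype V] [DecidableEq V]

/-!
In a graphoid, swapping adjacent entries `x, y` of a permutation when `x → y` is not an edge of the
induced DAG leaves the DAG unchanged: only the predecessor sets of `x` and `y` change, each by one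
vertex, and the independence of `x` and `y` given their common predecessors lets contraction and
intersection carry every parent test across that change. Since `j → k` is singular, no ancestor of
`k` in `δ₂` is a child of `j` or of a non-ancestor of `k`; such swaps therefore sort `δ₂` into
`γ, j, γᶜ` and then move `k` left past `γᶜ`. The last swap puts `j` after `k`, which removes the
edge `j → k`.
-/

open Relation

theorem Relation.TransGen.exists_seq {α : Type*} {r : α → α → Prop} {a b : α}
    (h : TransGen r a b) :
    ∃ (n : ℕ) (f : ℕ → α), 1 ≤ n ∧ f 0 = a ∧ f n = b ∧ ∀ i < n, r (f i) (f (i + 1)) := by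
  induction h with
  | @single b hab =>
    refine ⟨1, fun i => if i = 0 then a else b, le_rfl, rfl, rfl, fun i hi => ?_⟩
    obtain rfl : i = 0 := by omega
    simpa using hab
  | @tail b c _ hbc ih =>
    obtain ⟨n, f, hn, hf0, hfn, hf⟩ := ih
    refine ⟨n + 1, fun i => if i ≤ n then f i else c, by omega, by simpa using hf0, by simp,
      fun i hi => ?_⟩
    rcases Nat.lt_succ_iff_lt_or_eq.1 hi with hi | rfl
    · simpa [hi.le, Nat.succ_le_of_lt hi] using hf i hi
    · simpa [hfn] using hbc

variable {I : IndepModel V}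

section

omit [Fintype V]

theorem pre_append_of_notMem {L₁ : List V} (L₂ : List V) {v : V} (hv : v ∉ L₁) :
    pre (L₁ ++ L₂) v = L₁.toFinset ∪ pre L₂ v := by
  rw [pre, List.takeWhile_append_of_pos fun a ha => bne_iff_ne.2 (ne_of_mem_of_not_mem ha hv),
    List.toFinset_append, pre]

theorem pre_append_of_mem {L₁ : List V} (L₂ : List V) {v : V} (hv : v ∈ L₁) :
    pre (L₁ ++ L₂) v = pre L₁ v := by
  induction L₁ with
  | nil => cases hv
  | cons a L₁ ih =>
    by_cases hav : a = v
    · simp [pre, hav]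
    · have := ih ((List.mem_cons.1 hv).resolve_left (Ne.symm hav))
      simp_all [pre]

theorem pre_cons_self (L : List V) (v : V) : pre (v :: L) v = ∅ := by
  simp [pre]

theorem pre_cons_of_ne (L : List V) {a v : V} (h : a ≠ v) :
    pre (a :: L) v = insert a (pre L v) := by
  simp [pre, h]

theorem pre_append_cons_self_subset (A L : List V) (k : V) :
    pre (A ++ k :: L) k ⊆ A.toFinset := by
  by_cases hk : k ∈ A
  · rw [pre_append_of_mem _ hk]
    intro x hx
    rw [pre, List.mem_toFinset] at hx
    exact List.mem_toFinset.2 ((List.takeWhile_sublist _).subset hx)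
  · rw [pre_append_of_notMem _ hk, pre_cons_self, Finset.union_empty]

def IsRUParent (I : IndepModel V) (P : Finset V) (w v : V) : Prop :=
  w ∈ P ∧ ¬ I {w} {v} (P.erase w)

theorem Graphoid.indep_insert_iff_s15 (hG : Graphoid I) {x y w : V} {C : Finset V}
    (h : I {x} {y} (insert w C)) : I {w} {y} (insert x C) ↔ I {w} {y} C := by
  rw [← Finset.union_singleton] at h ⊢
  have hyx := hG.symm _ _ _ h
  constructor
  · intro hw
    exact hG.symm _ _ _
      (hG.decomposition _ _ _ _ (hG.intersection _ _ _ _ (hG.symm _ _ _ hw) hyx)).1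
  · intro hw
    exact hG.symm _ _ _ (hG.weakUnion _ _ _ _ (hG.contraction _ _ _ _ (hG.symm _ _ _ hw) hyx))

theorem Graphoid.isRUParent_insert_iff (hG : Graphoid I) {S : Finset V} {v y : V} (hy : y ∉ S)
    (hyv : I {y} {v} S) (w : V) : IsRUParent I (insert y S) w v ↔ IsRUParent I S w v := by
  by_cases hwy : w = y
  · subst hwy
    simp [IsRUParent, hy, Finset.erase_insert hy, hyv]
  by_cases hwS : w ∈ S
  · have hyv' : I {y} {v} (insert w (S.erase w)) := by rwa [Finset.insert_erase hwS]
    simp only [IsRUParent, Finset.mem_insert, hwy, hwS, or_true, true_and,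
      Finset.erase_insert_of_ne (Ne.symm hwy)]
    rw [hG.indep_insert_iff_s15 hyv']
  · simp [IsRUParent, hwy, hwS]

end

theorem mem_RUedges_s15 {L : List V} {w v : V} :
    (w, v) ∈ RUedges I L ↔ IsRUParent I (pre L v) w v := by
  simp [RUedges, IsRUParent]

theorem notMem_RUedges_append_cons {A L : List V} {j k : V} (hj : j ∉ A) :
    (j, k) ∉ RUedges I (A ++ k :: L) :=
  fun h => hj (List.mem_toFinset.1 (pre_append_cons_self_subset A L k (mem_RUedges_s15.1 h).1))

theorem RUedges_swap_of_notMem (hG : Graphoid I) (δa δb : List V) {x y : V}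
    (hxy : (x, y) ∉ RUedges I (δa ++ x :: y :: δb)) :
    RUedges I (δa ++ y :: x :: δb) = RUedges I (δa ++ x :: y :: δb) := by
  rcases eq_or_ne x y with rfl | hne
  · rfl
  have hind : x ∉ δa → y ∉ δa → I {x} {y} δa.toFinset := by
    intro hx hy
    rw [mem_RUedges_s15, pre_append_of_notMem _ hy, pre_cons_of_ne _ hne, pre_cons_self,
      Finset.union_insert, Finset.union_empty] at hxy
    by_contra h
    exact hxy ⟨Finset.mem_insert_self _ _, by rwa [Finset.erase_insert (by simpa using hx)]⟩
  ext ⟨w, v⟩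
  simp only [mem_RUedges_s15]
  by_cases hv : v ∈ δa
  · rw [pre_append_of_mem _ hv, pre_append_of_mem _ hv]
  rw [pre_append_of_notMem _ hv, pre_append_of_notMem _ hv]
  rcases eq_or_ne v x with rfl | hvx
  · rw [pre_cons_of_ne _ hne.symm, pre_cons_self, pre_cons_self, Finset.union_insert,
      Finset.union_empty]
    by_cases hy : y ∈ δa
    · rw [Finset.insert_eq_of_mem (List.mem_toFinset.2 hy)]
    · exact hG.isRUParent_insert_iff (by simpa using hy) (hG.symm _ _ _ (hind hv hy)) w
  rcases eq_or_ne v y with rfl | hvy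
  · rw [pre_cons_self, pre_cons_of_ne _ hne, pre_cons_self, Finset.union_insert,
      Finset.union_empty]
    by_cases hx : x ∈ δa
    · rw [Finset.insert_eq_of_mem (List.mem_toFinset.2 hx)]
    · exact (hG.isRUParent_insert_iff (by simpa using hx) (hind hx hv) w).symm
  · rw [pre_cons_of_ne _ hvx.symm, pre_cons_of_ne _ hvy.symm, pre_cons_of_ne _ hvx.symm,
      pre_cons_of_ne _ hvy.symm, Finset.insert_comm]

def DAGPreservingSwap (I : IndepModel V) (G : EdgeSet V) (σ τ : List V) : Prop :=
  AdjTrans σ τ ∧ RUedges I σ = G ∧ RUedges I τ = G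

variable {G : EdgeSet V}

theorem DAGPreservingSwap.of_notMem (hG : Graphoid I) {δa δb : List V} {x y : V}
    (hσ : RUedges I (δa ++ x :: y :: δb) = G) (hxy : (x, y) ∉ G) :
    DAGPreservingSwap I G (δa ++ x :: y :: δb) (δa ++ y :: x :: δb) :=
  ⟨⟨δa, δb, x, y, rfl, rfl⟩, hσ, by rw [RUedges_swap_of_notMem hG δa δb (hσ ▸ hxy), hσ]⟩

theorem RUedges_eq_of_reflTransGen {σ τ : List V}
    (h : ReflTransGen (DAGPreservingSwap I G) σ τ) (hσ : RUedges I σ = G) : RUedges I τ = G := by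
  cases h with
  | refl => exact hσ
  | tail _ hstep => exact hstep.2.2

theorem reflTransGen_moveLeft (hG : Graphoid I) (d : V) (B : List V) :
    ∀ (M A : List V), RUedges I (A ++ M ++ d :: B) = G → (∀ m ∈ M, (m, d) ∉ G) →
      ReflTransGen (DAGPreservingSwap I G) (A ++ M ++ d :: B) (A ++ d :: (M ++ B))
  | [], A, _, _ => by simpa using ReflTransGen.refl
  | m :: M, A, hσ, hM => by
    have hmove := reflTransGen_moveLeft hG d B M (A ++ [m]) (by simpa using hσ)
      fun m' hm' => hM m' (List.mem_cons_of_mem m hm')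
    simp only [List.append_assoc, List.cons_append] at hσ hmove ⊢
    exact hmove.tail (.of_notMem hG (RUedges_eq_of_reflTransGen hmove hσ) (hM m List.mem_cons_self))

theorem reflTransGen_partition (hG : Graphoid I) (p : V → Prop)
    (hp : ∀ c g, (c, g) ∈ G → p g → p c) (B : List V) :
    ∀ (δ A M : List V), RUedges I (A ++ M ++ δ ++ B) = G →
      (∀ m ∈ M, ∀ g ∈ δ, p g → (m, g) ∉ G) →
      ReflTransGen (DAGPreservingSwap I G) (A ++ M ++ δ ++ B)
        (A ++ δ.filter (fun v => p v) ++ M ++ δ.filter (fun v => ¬ p v) ++ B)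
  | [], A, M, hσ, _ => by simpa using ReflTransGen.refl
  | d :: δ, A, M, hσ, hM => by
    by_cases hd : p d
    · have hmove := reflTransGen_moveLeft hG d (δ ++ B) M A (by simpa using hσ)
        fun m hm => hM m hm d List.mem_cons_self hd
      have hsort := reflTransGen_partition hG p hp B δ (A ++ [d]) M
        (by simpa using RUedges_eq_of_reflTransGen hmove (by simpa using hσ))
        fun m hm g hg => hM m hm g (List.mem_cons_of_mem d hg)
      simp only [List.filter_cons, hd, decide_true, List.append_assoc, List.cons_append]
        at hmove hsort ⊢
      exact hmove.trans hsort
    · have hsort := reflTransGen_partition hG p hp B δ A (M ++ [d]) (by simpa using hσ) <| by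
        intro m hm g hg hpg
        rcases List.mem_append.1 hm with hm | hm
        · exact hM m hm g (List.mem_cons_of_mem d hg) hpg
        · rw [List.mem_singleton.1 hm]
          exact fun hdg => hd (hp d g hdg hpg)
      simpa [List.filter_cons, hd] using hsort

theorem reflTransGen_tuck (hG : Graphoid I) {j k : V} {δ₁ δ₂ δ₃ : List V}
    (hσ : RUedges I (δ₁ ++ j :: (δ₂ ++ k :: δ₃)) = G) (hsing : SingularEdge G j k)
    (hj : j ∉ δ₂) (hk : k ∉ δ₂) :
    ReflTransGen (DAGPreservingSwap I G) (δ₁ ++ j :: (δ₂ ++ k :: δ₃))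
      (δ₁ ++ δ₂.filter (fun i => TransGen (Adj G) i k) ++
        j :: k :: (δ₂.filter (fun i => ¬ TransGen (Adj G) i k) ++ δ₃)) := by
  have hsort := reflTransGen_partition hG (fun i => TransGen (Adj G) i k)
    (fun c g hcg hg => TransGen.head hcg hg) (k :: δ₃) δ₂ δ₁ [j] (by simpa using hσ) <| by
      intro m hm g hg hgk hjg
      rw [List.mem_singleton.1 hm] at hjg
      rcases hsing.2 g (TransGen.single hjg) hgk with rfl | rfl
      exacts [hj hg, hk hg]
  have hmove := reflTransGen_moveLeft hG k δ₃ _ _ (RUedges_eq_of_reflTransGen hsort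
    (by simpa using hσ)) fun c hc hck => of_decide_eq_true (List.mem_filter.1 hc).2 (.single hck)
  simpa using hsort.trans hmove

/-- if `j → k` is singular in `G_π`, there is a walk of adjacent
transpositions from `π` to `τ = tuck(π, j, k)` that is DAG-preserving except at the
final permutation, whose DAG differs from `G_π`. -/
theorem singular_tuck_walk (I : IndepModel V) (hG : Graphoid I)
    (j k : V) (δ₁ δ₂ δ₃ γ γc : List V) (π τ : List V)
    (hπ : π = δ₁ ++ j :: (δ₂ ++ k :: δ₃))
    (hperm : IsPermList π)
    (hsing : SingularEdge (RUedges I π) j k)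
    (hγ : γ = δ₂.filter (fun i => decide (Relation.TransGen (Adj (RUedges I π)) i k)))
    (hγc : γc = δ₂.filter (fun i => decide (¬ Relation.TransGen (Adj (RUedges I π)) i k)))
    (hτ : τ = δ₁ ++ (γ ++ k :: j :: (γc ++ δ₃))) :
    ∃ (n : ℕ) (ws : ℕ → List V), 1 ≤ n ∧ ws 0 = π ∧ ws n = τ ∧
      (∀ i < n, AdjTrans (ws i) (ws (i + 1))) ∧
      (∀ i < n, RUedges I (ws i) = RUedges I π) ∧
      RUedges I τ ≠ RUedges I π := by
  have hnd : (δ₁ ++ j :: (δ₂ ++ k :: δ₃)).Nodup := hπ ▸ hperm.1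
  have hjδ₁ : j ∉ δ₁ := fun h => List.disjoint_of_nodup_append hnd h List.mem_cons_self
  have htail := List.nodup_cons.1 hnd.of_append_right
  have hjδ₂ : j ∉ δ₂ := fun h => htail.1 (List.mem_append_left _ h)
  have hkδ₂ : k ∉ δ₂ := fun h => List.disjoint_of_nodup_append htail.2 h List.mem_cons_self
  have hwalk := reflTransGen_tuck hG (by rw [hπ]) hsing hjδ₂ hkδ₂
  rw [← hπ, ← hγ, ← hγc] at hwalk
  have hlast : AdjTrans (δ₁ ++ γ ++ j :: k :: (γc ++ δ₃)) τ :=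
    ⟨δ₁ ++ γ, γc ++ δ₃, j, k, rfl, by simp [hτ]⟩
  have hsteps : TransGen (fun σ σ' => AdjTrans σ σ' ∧ RUedges I σ = RUedges I π) π τ :=
    TransGen.tail' (ReflTransGen.mono (fun _ _ h => ⟨h.1, h.2.1⟩) _ _ hwalk)
      ⟨hlast, RUedges_eq_of_reflTransGen hwalk rfl⟩
  obtain ⟨n, ws, hn, h0, hnτ, hstep⟩ := hsteps.exists_seq
  refine ⟨n, ws, hn, h0, hnτ, fun i hi => (hstep i hi).1, fun i hi => (hstep i hi).2, fun hτG => ?_⟩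
  have hjτ : j ∉ δ₁ ++ γ := by
    rw [List.mem_append, hγ]
    exact fun h => h.elim hjδ₁ fun h => hjδ₂ (List.mem_of_mem_filter h)
  have hjkτ : (j, k) ∈ RUedges I (δ₁ ++ γ ++ k :: j :: (γc ++ δ₃)) := by
    rw [show δ₁ ++ γ ++ k :: j :: (γc ++ δ₃) = τ by simp [hτ], hτG]
    exact hsing.1
  exact notMem_RUedges_append_cons hjτ hjkτ
end
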